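/- Let n ≥ 2 and let λ ∈ ℝⁿ with λ ∈ Γ₂. Define μ ∈ ℝⁿ by μ_i = λ_i − (σ₂(λ)/σ₁(λ))/(n−1) for every i. Then σ₁(μ) ≥ (1/2)·σ₁(λ) > 0. -/

import Mathlib

/-- The `k`-th elementary symmetric polynomial `σ_k` of `λ ∈ ℝⁿ`. -/
noncomputable def sigma (n k : ℕ) (lam : Fin n → ℝ) : ℝ :=
  ∑ s ∈ Finset.univ.powersetCard k, ∏ i ∈ s, lam i

/-- Gårding's cone `Γ_k`: all `σ_l`, `1 ≤ l ≤ k`, are positive. -/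
def InGamma (n k : ℕ) (lam : Fin n → ℝ) : Prop :=
  ∀ l : ℕ, 1 ≤ l → l ≤ k → 0 < sigma n l lam


/-!
By Newton's identity `2 σ₂ = σ₁² - Σ λᵢ²` and Cauchy–Schwarz `σ₁² ≤ n Σ λᵢ²`, one gets the
Maclaurin-type bound `2n σ₂ ≤ (n - 1) σ₁²`. Since `μ` is `λ` shifted by the constant
`c = σ₂ / (σ₁ (n - 1))`, we have `σ₁(μ) = σ₁(λ) - n c`, and the bound says exactly `n c ≤ σ₁(λ) / 2`.
-/

open MvPolynomial Finset

lemma sigma_eq_eval_esymm (n k : ℕ) (lam : Fin n → ℝ) :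
    sigma n k lam = eval lam (esymm (Fin n) ℝ k) := by
  simp [sigma, esymm]

lemma sigma_one (n : ℕ) (lam : Fin n → ℝ) : sigma n 1 lam = ∑ i, lam i := by
  simp [sigma_eq_eval_esymm, esymm_one]

lemma two_mul_sigma_two (n : ℕ) (lam : Fin n → ℝ) :
    2 * sigma n 2 lam = (∑ i, lam i) ^ 2 - ∑ i, lam i ^ 2 := by
  have newton := congrArg (eval lam) (mul_esymm_eq_sum (Fin n) ℝ 2)
  rw [show {a ∈ antidiagonal 2 | a.1 < 2} = {(0, 2), (1, 1)} by decide] at newton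
  simp [psum, esymm_one, esymm_zero] at newton
  rw [sigma_eq_eval_esymm, newton]
  ring

lemma two_mul_card_mul_sigma_two_le (n : ℕ) (lam : Fin n → ℝ) :
    2 * n * sigma n 2 lam ≤ (n - 1) * sigma n 1 lam ^ 2 := by
  have cauchy_schwarz := sq_sum_le_card_mul_sum_sq (s := univ) (f := lam)
  rw [card_univ, Fintype.card_fin] at cauchy_schwarz
  rw [mul_right_comm, two_mul_sigma_two, sigma_one]
  linarith

lemma sigma_one_sub_const (n : ℕ) (lam : Fin n → ℝ) (c : ℝ) :
    sigma n 1 (fun i => lam i - c) = sigma n 1 lam - n * c := by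
  simp [sigma_one, sum_sub_distrib]

theorem stmt_1 (n : ℕ) (hn : 2 ≤ n) (lam : Fin n → ℝ) (hlam : InGamma n 2 lam)
    (mu : Fin n → ℝ)
    (hmu : ∀ i, mu i = lam i - (sigma n 2 lam / sigma n 1 lam) / ((n : ℝ) - 1)) :
    (1 / 2) * sigma n 1 lam ≤ sigma n 1 mu ∧ 0 < (1 / 2) * sigma n 1 lam := by
  have hσ₁ : 0 < sigma n 1 lam := hlam 1 le_rfl one_le_two
  have hn₁ : (0 : ℝ) < n - 1 := by
    have : (2 : ℝ) ≤ n := by exact_mod_cast hn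
    linarith
  obtain rfl : mu = fun i => lam i - sigma n 2 lam / sigma n 1 lam / (n - 1) := funext hmu
  refine ⟨?_, by positivity⟩
  have shift_le : n * (sigma n 2 lam / sigma n 1 lam / (n - 1)) ≤ sigma n 1 lam / 2 := by
    rw [div_div, mul_div_assoc', div_le_div_iff₀ (by positivity) two_pos]
    linarith [two_mul_card_mul_sigma_two_le n lam]
  rw [sigma_one_sub_const]
  linarith
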